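/- The set 𝒮_{n,m} of matrices M(Ψ,X,E) with Ψ ∈ Sp(2n), X ∈ Mat_{2n,m}(R), E ∈ Mat_m(R) symmetric, forms a subgroup of the symplectic group Sp(2n+2m). -/

import Mathlib

open Matrix

abbrev V (n : ℕ) := Fin n ⊕ Fin n

/-- The standard complex structure `J₀ = [[0,-I],[I,0]]` on `ℝ^{2n}`. -/
noncomputable def J0 (n : ℕ) : Matrix (V n) (V n) ℝ :=
  Matrix.fromBlocks 0 (-1) 1 0

/-- The standard complex structure `J̃₀` on `ℝ^{2n} ⊕ ℝ^m ⊕ ℝ^m`. -/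
noncomputable def Jt0 (n m : ℕ) : Matrix (V n ⊕ V m) (V n ⊕ V m) ℝ :=
  Matrix.fromBlocks (J0 n) 0 0 (J0 m)

/-- `Ψ` is symplectic: `Ψᵀ J₀ Ψ = J₀`. -/
def IsSymplectic {n : ℕ} (Ψ : Matrix (V n) (V n) ℝ) : Prop :=
  Ψᵀ * J0 n * Ψ = J0 n

/-- The block matrix `M(Ψ,X,E) = [[Ψ, ΨX, 0],[0, I, 0],[XᵀJ₀, E + ½XᵀJ₀X, I]]`. -/
noncomputable def Mblk {n m : ℕ} (Ψ : Matrix (V n) (V n) ℝ) (X : Matrix (V n) (Fin m) ℝ)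
    (E : Matrix (Fin m) (Fin m) ℝ) : Matrix (V n ⊕ V m) (V n ⊕ V m) ℝ :=
  Matrix.fromBlocks Ψ (Matrix.fromCols (Ψ * X) 0)
    (Matrix.fromRows 0 (Xᵀ * J0 n))
    (Matrix.fromBlocks 1 0 (E + (1 / 2 : ℝ) • (Xᵀ * J0 n * X)) 1)

/-!
Substitute `Y = ΨX` and `F = E + ½ XᵀJ₀X`. Since `ΨᵀJ₀Ψ = J₀`, the bottom-left block `XᵀJ₀`
becomes `YᵀJ₀Ψ` and `XᵀJ₀X = YᵀJ₀Y`; as `XᵀJ₀X` is skew, the symmetry of `E` becomes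
`F - Fᵀ = YᵀJ₀Y`. In these coordinates the half disappears and block multiplication gives the
group law `M(Ψ,Y,F) M(Ψ',Y',F') = M(ΨΨ', ΨY' + Y, YᵀJ₀ΨY' + F + F')`, which preserves the
constraint, and the inverse `M(Ψ⁻¹, -Ψ⁻¹Y, YᵀJ₀Y - F)`. That each `M(Ψ,Y,F)` preserves `J̃₀` is
one more block computation, in which the constraint on `F - Fᵀ` cancels the block `YᵀJ₀Y`.
-/

lemma fromRows_add_fromRows {R m₁ m₂ p : Type*} [Add R] (A₁ B₁ : Matrix m₁ p R)
    (A₂ B₂ : Matrix m₂ p R) : fromRows A₁ A₂ + fromRows B₁ B₂ = fromRows (A₁ + B₁) (A₂ + B₂) := by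
  ext (i | i) j <;> rfl

lemma fromCols_add_fromCols {R p n₁ n₂ : Type*} [Add R] (A₁ B₁ : Matrix p n₁ R)
    (A₂ B₂ : Matrix p n₂ R) : fromCols A₁ A₂ + fromCols B₁ B₂ = fromCols (A₁ + B₁) (A₂ + B₂) := by
  ext i (j | j) <;> rfl

lemma fromCols_fromRows_zero_add_fromBlocks {R m₁ m₂ n₁ n₂ : Type*} [AddZeroClass R]
    (P A : Matrix m₁ n₁ R) (B : Matrix m₁ n₂ R) (Q C : Matrix m₂ n₁ R) (D : Matrix m₂ n₂ R) :
    fromCols (fromRows P Q) 0 + fromBlocks A B C D = fromBlocks (P + A) B (Q + C) D := by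
  ext (i | i) (j | j) <;> simp

lemma J0_transpose (n : ℕ) : (J0 n)ᵀ = -J0 n := J_transpose (Fin n) ℝ

lemma transpose_mul_J0_mul_transpose {n : ℕ} {p q : Type*} (Y : Matrix (V n) p ℝ)
    (Z : Matrix (V n) q ℝ) : (Yᵀ * J0 n * Z)ᵀ = -(Zᵀ * J0 n * Y) := by
  rw [transpose_mul, transpose_mul, J0_transpose, transpose_transpose, Matrix.neg_mul,
    Matrix.mul_neg, Matrix.mul_assoc]

lemma transpose_eq_self_iff_add_half_smul_sub_transpose {ι : Type*} {E K : Matrix ι ι ℝ}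
    (hK : Kᵀ = -K) : Eᵀ = E ↔ (E + (1 / 2 : ℝ) • K) - (E + (1 / 2 : ℝ) • K)ᵀ = K := by
  rw [transpose_add, transpose_smul, hK,
    show E + (1 / 2 : ℝ) • K - (Eᵀ + (1 / 2 : ℝ) • -K) = E - Eᵀ + K by module,
    add_eq_right, sub_eq_zero, eq_comm]

lemma isSymplectic_iff_mem_symplecticGroup {n : ℕ} {Ψ : Matrix (V n) (V n) ℝ} :
    IsSymplectic Ψ ↔ Ψ ∈ symplecticGroup (Fin n) ℝ :=
  SymplecticGroup.mem_iff'.symm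

namespace IsSymplectic

variable {n : ℕ} {Ψ Ψ' : Matrix (V n) (V n) ℝ}

lemma one : IsSymplectic (1 : Matrix (V n) (V n) ℝ) :=
  isSymplectic_iff_mem_symplecticGroup.2 (one_mem _)

lemma mul (h : IsSymplectic Ψ) (h' : IsSymplectic Ψ') : IsSymplectic (Ψ * Ψ') :=
  isSymplectic_iff_mem_symplecticGroup.2 <|
    mul_mem (isSymplectic_iff_mem_symplecticGroup.1 h) (isSymplectic_iff_mem_symplecticGroup.1 h')

lemma inv (h : IsSymplectic Ψ) : IsSymplectic Ψ⁻¹ := by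
  rw [isSymplectic_iff_mem_symplecticGroup] at h ⊢
  simpa only [SymplecticGroup.coe_inv'] using (⟨Ψ, h⟩⁻¹ : symplecticGroup (Fin n) ℝ).2

lemma isUnit_det (h : IsSymplectic Ψ) : IsUnit Ψ.det :=
  SymplecticGroup.symplectic_det (isSymplectic_iff_mem_symplecticGroup.1 h)

lemma transpose_mul_J0_mul {p q : Type*} (h : IsSymplectic Ψ) (Y : Matrix (V n) p ℝ)
    (Z : Matrix (V n) q ℝ) : (Ψ * Y)ᵀ * J0 n * (Ψ * Z) = Yᵀ * J0 n * Z := by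
  calc (Ψ * Y)ᵀ * J0 n * (Ψ * Z) = Yᵀ * (Ψᵀ * J0 n * Ψ) * Z := by
        simp only [transpose_mul, Matrix.mul_assoc]
    _ = Yᵀ * J0 n * Z := by rw [show Ψᵀ * J0 n * Ψ = J0 n from h]

end IsSymplectic

section SympBlock

variable {n m : ℕ}

noncomputable def sympBlock (Ψ : Matrix (V n) (V n) ℝ) (Y : Matrix (V n) (Fin m) ℝ)
    (F : Matrix (Fin m) (Fin m) ℝ) : Matrix (V n ⊕ V m) (V n ⊕ V m) ℝ :=
  fromBlocks Ψ (fromCols Y 0) (fromRows 0 (Yᵀ * J0 n * Ψ)) (fromBlocks 1 0 F 1)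

lemma sympBlock_one : (sympBlock 1 0 0 : Matrix (V n ⊕ V m) (V n ⊕ V m) ℝ) = 1 := by
  simp [sympBlock, ← fromBlocks_one]

lemma sympBlock_mul {Ψ Ψ' : Matrix (V n) (V n) ℝ} (hΨ : IsSymplectic Ψ)
    (Y Y' : Matrix (V n) (Fin m) ℝ) (F F' : Matrix (Fin m) (Fin m) ℝ) :
    sympBlock Ψ Y F * sympBlock Ψ' Y' F' =
      sympBlock (Ψ * Ψ') (Ψ * Y' + Y) (Yᵀ * J0 n * Ψ * Y' + F + F') := by
  have hrow : Yᵀ * J0 n * Ψ * Ψ' + Y'ᵀ * J0 n * Ψ' = (Ψ * Y' + Y)ᵀ * J0 n * (Ψ * Ψ') := by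
    rw [transpose_add, Matrix.add_mul, Matrix.add_mul, ← hΨ.transpose_mul_J0_mul Y' Ψ']
    simp only [Matrix.mul_assoc, add_comm]
  simp only [sympBlock, fromBlocks_multiply, fromCols_mul_fromRows, mul_fromCols,
    fromCols_mul_fromBlocks, fromRows_mul, fromBlocks_mul_fromRows, fromRows_add_fromRows,
    fromCols_add_fromCols, Matrix.mul_zero, Matrix.zero_mul, Matrix.mul_one, Matrix.one_mul,
    add_zero, zero_add, hrow, fromCols_fromRows_zero_add_fromBlocks, add_assoc]

lemma sympBlock_transpose_mul_Jt0_mul {Ψ : Matrix (V n) (V n) ℝ} (hΨ : IsSymplectic Ψ)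
    {Y : Matrix (V n) (Fin m) ℝ} {F : Matrix (Fin m) (Fin m) ℝ} (hF : F - Fᵀ = Yᵀ * J0 n * Y) :
    (sympBlock Ψ Y F)ᵀ * Jt0 n m * sympBlock Ψ Y F = Jt0 n m := by
  have hΨ' : Ψᵀ * (J0 n * Ψ) = J0 n := by rw [← Matrix.mul_assoc]; exact hΨ
  have hF' : Yᵀ * (J0 n * Y) + (Fᵀ + -F) = 0 := by rw [← Matrix.mul_assoc, ← hF]; abel
  rw [sympBlock, Jt0, show J0 m = fromBlocks 0 (-1) 1 0 from rfl]
  simp only [fromBlocks_transpose, transpose_fromCols, transpose_fromRows,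
    fromBlocks_multiply, fromCols_mul_fromRows, mul_fromCols, fromCols_mul_fromBlocks,
    fromRows_mul, fromBlocks_mul_fromRows, fromRows_add_fromRows, fromCols_add_fromCols,
    Matrix.mul_zero, Matrix.zero_mul, Matrix.mul_one, Matrix.one_mul, add_zero, zero_add,
    transpose_zero, transpose_one, transpose_mul, transpose_transpose, J0_transpose,
    Matrix.neg_mul, Matrix.mul_neg, neg_zero, Matrix.mul_assoc, hΨ', add_neg_cancel,
    fromRows_zero, fromCols_zero, fromCols_fromRows_zero_add_fromBlocks, hF']

lemma Mblk_eq_sympBlock {Ψ : Matrix (V n) (V n) ℝ} (hΨ : IsSymplectic Ψ)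
    (X : Matrix (V n) (Fin m) ℝ) (E : Matrix (Fin m) (Fin m) ℝ) :
    Mblk Ψ X E = sympBlock Ψ (Ψ * X) (E + (1 / 2 : ℝ) • (Xᵀ * J0 n * X)) := by
  have hrow : (Ψ * X)ᵀ * J0 n * Ψ = Xᵀ * J0 n := by
    simpa using hΨ.transpose_mul_J0_mul X (1 : Matrix (V n) (V n) ℝ)
  rw [Mblk, sympBlock, hrow]

lemma exists_Mblk_iff_exists_sympBlock (M : Matrix (V n ⊕ V m) (V n ⊕ V m) ℝ) :
    (∃ (Ψ : Matrix (V n) (V n) ℝ) (X : Matrix (V n) (Fin m) ℝ) (E : Matrix (Fin m) (Fin m) ℝ),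
        IsSymplectic Ψ ∧ Eᵀ = E ∧ M = Mblk Ψ X E) ↔
      ∃ (Ψ : Matrix (V n) (V n) ℝ) (Y : Matrix (V n) (Fin m) ℝ) (F : Matrix (Fin m) (Fin m) ℝ),
        IsSymplectic Ψ ∧ F - Fᵀ = Yᵀ * J0 n * Y ∧ M = sympBlock Ψ Y F := by
  constructor
  · rintro ⟨Ψ, X, E, hΨ, hE, rfl⟩
    refine ⟨Ψ, Ψ * X, _, hΨ, ?_, Mblk_eq_sympBlock hΨ X E⟩
    rw [hΨ.transpose_mul_J0_mul]
    exact (transpose_eq_self_iff_add_half_smul_sub_transpose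
      (transpose_mul_J0_mul_transpose X X)).1 hE
  · rintro ⟨Ψ, Y, F, hΨ, hF, rfl⟩
    have hY : Ψ * (Ψ⁻¹ * Y) = Y := mul_nonsing_inv_cancel_left _ Y hΨ.isUnit_det
    have hK : (Ψ⁻¹ * Y)ᵀ * J0 n * (Ψ⁻¹ * Y) = Yᵀ * J0 n * Y := by
      rw [← hΨ.transpose_mul_J0_mul, hY]
    have hF' : F = (F - (1 / 2 : ℝ) • (Yᵀ * J0 n * Y)) + (1 / 2 : ℝ) • (Yᵀ * J0 n * Y) := by
      abel
    refine ⟨Ψ, Ψ⁻¹ * Y, F - (1 / 2 : ℝ) • (Yᵀ * J0 n * Y), hΨ, ?_, ?_⟩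
    · rw [transpose_eq_self_iff_add_half_smul_sub_transpose
        (transpose_mul_J0_mul_transpose Y Y), ← hF', hF]
    · rw [Mblk_eq_sympBlock hΨ, hY, hK, ← hF']

lemma sub_transpose_of_sympBlock_mul {Ψ : Matrix (V n) (V n) ℝ} (hΨ : IsSymplectic Ψ)
    {Y Y' : Matrix (V n) (Fin m) ℝ} {F F' : Matrix (Fin m) (Fin m) ℝ}
    (hF : F - Fᵀ = Yᵀ * J0 n * Y) (hF' : F' - F'ᵀ = Y'ᵀ * J0 n * Y') :
    (Yᵀ * J0 n * Ψ * Y' + F + F') - (Yᵀ * J0 n * Ψ * Y' + F + F')ᵀ =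
      (Ψ * Y' + Y)ᵀ * J0 n * (Ψ * Y' + Y) := by
  rw [Matrix.mul_assoc _ Ψ, transpose_add, transpose_add, transpose_mul_J0_mul_transpose,
    transpose_add]
  simp only [Matrix.add_mul, Matrix.mul_add]
  rw [hΨ.transpose_mul_J0_mul, ← hF, ← hF']
  abel

lemma sympBlock_mul_sympBlock_inv {Ψ : Matrix (V n) (V n) ℝ} (hΨ : IsSymplectic Ψ)
    (Y : Matrix (V n) (Fin m) ℝ) (F : Matrix (Fin m) (Fin m) ℝ) :
    sympBlock Ψ Y F * sympBlock Ψ⁻¹ (-(Ψ⁻¹ * Y)) (Yᵀ * J0 n * Y - F) = 1 := by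
  rw [sympBlock_mul hΨ, mul_nonsing_inv _ hΨ.isUnit_det, Matrix.mul_neg,
    mul_nonsing_inv_cancel_left _ Y hΨ.isUnit_det, neg_add_cancel, Matrix.mul_neg,
    Matrix.mul_assoc _ Ψ, mul_nonsing_inv_cancel_left _ Y hΨ.isUnit_det,
    show -(Yᵀ * J0 n * Y) + F + (Yᵀ * J0 n * Y - F) = 0 by abel, sympBlock_one]

lemma sub_transpose_of_sympBlock_inv {Ψ : Matrix (V n) (V n) ℝ} (hΨ : IsSymplectic Ψ)
    {Y : Matrix (V n) (Fin m) ℝ} {F : Matrix (Fin m) (Fin m) ℝ} (hF : F - Fᵀ = Yᵀ * J0 n * Y) :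
    (Yᵀ * J0 n * Y - F) - (Yᵀ * J0 n * Y - F)ᵀ = (-(Ψ⁻¹ * Y))ᵀ * J0 n * (-(Ψ⁻¹ * Y)) := by
  rw [transpose_neg, Matrix.neg_mul, Matrix.neg_mul, Matrix.mul_neg, neg_neg,
    hΨ.inv.transpose_mul_J0_mul, transpose_sub, transpose_mul_J0_mul_transpose, ← hF]
  abel

end SympBlock

/-- The set `𝒮_{n,m}` of matrices `M(Ψ,X,E)` is a subgroup of `Sp(2n+2m)`:
all its elements are symplectic for `J̃₀`, it contains the identity, it is
closed under multiplication, and every element is invertible with inverse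
again in the set. -/
theorem stmt3 {n m : ℕ} :
    (let S : Set (Matrix (V n ⊕ V m) (V n ⊕ V m) ℝ) :=
      {M | ∃ (Ψ : Matrix (V n) (V n) ℝ) (X : Matrix (V n) (Fin m) ℝ)
          (E : Matrix (Fin m) (Fin m) ℝ),
            IsSymplectic Ψ ∧ Eᵀ = E ∧ M = Mblk Ψ X E};
    (∀ M ∈ S, Mᵀ * Jt0 n m * M = Jt0 n m) ∧
    (1 : Matrix (V n ⊕ V m) (V n ⊕ V m) ℝ) ∈ S ∧
    (∀ M ∈ S, ∀ M' ∈ S, M * M' ∈ S) ∧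
    (∀ M ∈ S, IsUnit M ∧ M⁻¹ ∈ S)) := by
  intro S
  have hS (M) : M ∈ S ↔ _ := exists_Mblk_iff_exists_sympBlock M
  refine ⟨?_, ?_, ?_, ?_⟩
  · intro M hM
    obtain ⟨Ψ, Y, F, hΨ, hF, rfl⟩ := (hS M).1 hM
    exact sympBlock_transpose_mul_Jt0_mul hΨ hF
  · exact (hS 1).2 ⟨1, 0, 0, IsSymplectic.one, by simp, sympBlock_one.symm⟩
  · intro M hM M' hM'
    obtain ⟨Ψ, Y, F, hΨ, hF, rfl⟩ := (hS M).1 hM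
    obtain ⟨Ψ', Y', F', hΨ', hF', rfl⟩ := (hS M').1 hM'
    exact (hS _).2 ⟨_, _, _, hΨ.mul hΨ', sub_transpose_of_sympBlock_mul hΨ hF hF',
      sympBlock_mul hΨ Y Y' F F'⟩
  · intro M hM
    obtain ⟨Ψ, Y, F, hΨ, hF, rfl⟩ := (hS M).1 hM
    have hinv := sympBlock_mul_sympBlock_inv hΨ Y F
    refine ⟨(isUnit_iff_isUnit_det _).2 (isUnit_det_of_right_inverse hinv), ?_⟩
    rw [inv_eq_right_inv hinv]
    exact (hS _).2 ⟨_, _, _, hΨ.inv, sub_transpose_of_sympBlock_inv hΨ hF, rfl⟩
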